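/- arXiv:2505.11082 — 8 statements merged into one kernel-verified Lean document; each statement's English description precedes it below -/
import Mathlib

section
/- Let G=(V,E) be a finite simple graph and m ∈ ℕ_{>0}. If there exists an i with 1 ≤ i ≤ |V| − m + 1 such that every subset W ⊆ V with |W| = i satisfies |N(W)| ≥ m − 1, then ffn(G) ≥ m. -/
open scoped Classical
noncomputable section

variable {V : Type*}

/-- The neighbourhood of a set of vertices: all vertices outside `S` adjacent to some
vertex of `S`. -/
def nbhd [Fintype V] (G : SimpleGraph V) (S : Finset V) : Finset V :=
  Finset.univ.filter fun v => v ∉ S ∧ ∃ u ∈ S, G.Adj u v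

/-- The burning sets of a strategy `F` (where `F i` is the firefighter set at time `i`):
`B 0 = V` and `B (t+1) = (B t \ F (t+1)) ∪ N(B t \ F (t+1))`. -/
def burn [Fintype V] (G : SimpleGraph V) (F : ℕ → Finset V) : ℕ → Finset V
  | 0 => Finset.univ
  | t + 1 => (burn G F t \ F (t + 1)) ∪ nbhd G (burn G F t \ F (t + 1))

/-- `F` is a `T`-winning `m`-strategy for `G`. -/
def WinningStrategy [Fintype V] (G : SimpleGraph V) (m T : ℕ) (F : ℕ → Finset V) : Prop :=
  (∀ i, (F i).card ≤ m) ∧ burn G F T = ∅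

/-- The firefighter number of `G`: the least `m` admitting a winning `m`-strategy. -/
def ffn [Fintype V] (G : SimpleGraph V) : ℕ :=
  sInf {m | ∃ T F, WinningStrategy G m T F}

/-!
Against fewer than `m` firefighters per step, at least `i + (m - 1)` vertices burn forever: if
`|B_t| ≥ i + (m - 1)`, then after removing at most `m - 1` firefighter vertices a set `W` of `i`
burning vertices survives, and `W` together with its at least `m - 1` neighbours burns at
time `t + 1`.
-/

open Finset

section Burning

variable [Fintype V] (G : SimpleGraph V)

theorem disjoint_nbhd (S : Finset V) : Disjoint S (nbhd G S) := by
  rw [disjoint_right]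
  intro v hv
  exact (mem_filter.mp hv).2.1

theorem union_nbhd_subset_union_nbhd {W S : Finset V} (h : W ⊆ S) :
    W ∪ nbhd G W ⊆ S ∪ nbhd G S := by
  intro v hv
  by_cases hvS : v ∈ S
  · exact mem_union_left _ hvS
  · refine mem_union_right _ (mem_filter.mpr ⟨mem_univ v, hvS, ?_⟩)
    rcases mem_union.mp hv with hvW | hvN
    · exact absurd (h hvW) hvS
    · obtain ⟨-, -, u, huW, hadj⟩ := mem_filter.mp hvN
      exact ⟨u, h huW, hadj⟩

theorem winningStrategy_univ : WinningStrategy G (Fintype.card V) 1 fun _ => univ :=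
  ⟨fun _ => (card_univ (α := V)).le, by simp [burn, nbhd]⟩

theorem add_le_card_burn {i k : ℕ} {F : ℕ → Finset V} (hF : ∀ j, (F j).card ≤ k)
    (hexp : ∀ W : Finset V, W.card = i → k ≤ (nbhd G W).card)
    (hik : i + k ≤ Fintype.card V) (t : ℕ) : i + k ≤ (burn G F t).card := by
  induction t with
  | zero => simpa [burn] using hik
  | succ t ih =>
    have hsurvivors : i ≤ (burn G F t \ F (t + 1)).card := by
      have := le_card_sdiff (F (t + 1)) (burn G F t)
      have := hF (t + 1)
      omega
    obtain ⟨W, hWsub, hWcard⟩ := exists_subset_card_eq hsurvivors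
    calc i + k ≤ W.card + (nbhd G W).card := by have := hexp W hWcard; omega
      _ = (W ∪ nbhd G W).card := (card_union_of_disjoint (disjoint_nbhd G W)).symm
      _ ≤ (burn G F (t + 1)).card := card_le_card (union_nbhd_subset_union_nbhd G hWsub)

theorem not_winningStrategy_of_forall_le_card_nbhd {i k T : ℕ} {F : ℕ → Finset V}
    (hi : 1 ≤ i) (hik : i + k ≤ Fintype.card V)
    (hexp : ∀ W : Finset V, W.card = i → k ≤ (nbhd G W).card) :
    ¬ WinningStrategy G k T F := by
  rintro ⟨hF, hT⟩
  have := add_le_card_burn G hF hexp hik T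
  rw [hT, card_empty] at this
  omega

end Burning

theorem ffn_lower_bound_neighbours_general [Fintype V] (G : SimpleGraph V) (m : ℕ)
    (h : ∃ i : ℕ, 1 ≤ i ∧ (i : ℤ) ≤ (Fintype.card V : ℤ) - m + 1 ∧
      ∀ W : Finset V, W.card = i → m - 1 ≤ (nbhd G W).card) :
    m ≤ ffn G := by
  obtain ⟨i, hi, hicard, hexp⟩ := h
  refine le_csInf ⟨_, 1, _, winningStrategy_univ G⟩ ?_
  rintro k ⟨T, F, hwin⟩
  by_contra! hkm
  have hexp' : ∀ W : Finset V, W.card = i → k ≤ (nbhd G W).card :=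
    fun W hW => (hexp W hW).trans' (by omega)
  exact not_winningStrategy_of_forall_le_card_nbhd G hi (by omega) hexp' hwin

/-- Lower bound: if there is an `i` with `1 ≤ i ≤ |V| - m + 1` such that every
vertex set of size `i` has at least `m - 1` neighbours, then `ffn G ≥ m`. -/
theorem ffn_lower_bound_neighbours [Fintype V] (G : SimpleGraph V) (m : ℕ) (hm : 0 < m)
    (h : ∃ i : ℕ, 1 ≤ i ∧ (i : ℤ) ≤ (Fintype.card V : ℤ) - m + 1 ∧
      ∀ W : Finset V, W.card = i → m - 1 ≤ (nbhd G W).card) :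
    m ≤ ffn G :=
  ffn_lower_bound_neighbours_general G m h
end
end

section
/- Let G=(V,E) be a finite simple graph and m ∈ ℕ_{>0}. If every vertex of G has degree at least m − 1 and V is nonempty, then ffn(G) ≥ m. -/
open scoped Classical
noncomputable section

variable {V : Type*}

/-- Lower bound: if every vertex has degree at least `m - 1` and `V` is nonempty,
then `ffn G ≥ m`. -/
theorem ffn_lower_bound_min_degree [Fintype V] [Nonempty V] (G : SimpleGraph V) (m : ℕ)
    (hm : 0 < m) (h : ∀ v : V, m - 1 ≤ G.degree v) :
    m ≤ ffn G := by
  -- closed neighborhood lemma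
  have closed : ∀ (S : Finset V) (v : V), v ∈ S →
      insert v (G.neighborFinset v) ⊆ S ∪ nbhd G S := by
    intro S v hv u hu
    rcases Finset.mem_insert.1 hu with rfl | hu
    · exact Finset.mem_union_left _ hv
    · by_cases hS : u ∈ S
      · exact Finset.mem_union_left _ hS
      · refine Finset.mem_union_right _ ?_
        simp only [nbhd, Finset.mem_filter, Finset.mem_univ, true_and]
        exact ⟨hS, v, hv, (G.mem_neighborFinset v u).1 hu⟩
  -- invariant: burn sets have card ≥ m under weak strategies
  have inv : ∀ (F : ℕ → Finset V), (∀ i, (F i).card ≤ m - 1) →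
      ∀ t, m ≤ (burn G F t).card := by
    intro F hF t
    induction t with
    | zero =>
      obtain ⟨v⟩ := ‹Nonempty V›
      have h2 : G.degree v + 1 ≤ Fintype.card V := by
        rw [SimpleGraph.degree,
          ← Finset.card_insert_of_notMem (SimpleGraph.notMem_neighborFinset_self G v),
          ← Finset.card_univ]
        exact Finset.card_le_card (Finset.subset_univ _)
      have := h v
      simp only [burn, Finset.card_univ]
      omega
    | succ t ih =>
      have hcard : 1 ≤ (burn G F t \ F (t + 1)).card := by
        have := Finset.le_card_sdiff (F (t + 1)) (burn G F t)
        have := hF (t + 1)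
        omega
      obtain ⟨v, hv⟩ := Finset.card_pos.1 hcard
      have hsub := closed _ v hv
      have h2 : G.degree v + 1 ≤ (burn G F (t + 1)).card := by
        rw [SimpleGraph.degree,
          ← Finset.card_insert_of_notMem (SimpleGraph.notMem_neighborFinset_self G v)]
        exact Finset.card_le_card (by rw [burn]; exact hsub)
      have := h v
      omega
  -- every element of the set is ≥ m
  have hall : ∀ k ∈ {m | ∃ T F, WinningStrategy G m T F}, m ≤ k := by
    rintro k ⟨T, F, hF, hT⟩
    by_contra hk
    push_neg at hk
    have : ∀ i, (F i).card ≤ m - 1 := fun i => by have := hF i; omega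
    have := inv F this T
    rw [hT] at this
    simp at this
    omega
  -- the set is nonempty (take F = univ at time 1, m = card V)
  have hne : {m | ∃ T F, WinningStrategy G m T F}.Nonempty := by
    refine ⟨Fintype.card V, 1, fun _ => Finset.univ, fun i => le_of_eq Finset.card_univ, ?_⟩
    simp [burn, nbhd]
  rw [ffn]
  exact le_csInf hne hall
end
end

section
/- Let G be a finite simple graph and let G′ be a subgraph of G (a graph on a subset of the vertices of G whose edge set is a subset of the edges of G between those vertices). Then ffn(G′) ≤ ffn(G). -/
open scoped Classical
noncomputable section

variable {V : Type*}

/-- Monotonicity under subgraphs: if `G'` is a graph on a subset `s` of the vertices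
of `G` whose edges are edges of `G`, then `ffn G' ≤ ffn G`. -/
theorem ffn_mono_subgraph [Fintype V] (G : SimpleGraph V) (s : Finset V)
    (G' : SimpleGraph {x // x ∈ s})
    (h : ∀ a b : {x // x ∈ s}, G'.Adj a b → G.Adj a.1 b.1) :
    ffn G' ≤ ffn G := by
  -- the set for G is nonempty: take m = |V|, F = univ always
  have hne : {m | ∃ T F, WinningStrategy G m T F}.Nonempty := by
    refine ⟨Fintype.card V, 1, fun _ => Finset.univ, fun _ => Finset.card_le_univ _, ?_⟩
    simp [burn, nbhd]
  obtain ⟨T, F, hF, hB⟩ := Nat.sInf_mem hne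
  apply Nat.sInf_le
  refine ⟨T, fun i => (F i).subtype (· ∈ s), ?_, ?_⟩
  · intro i
    calc ((F i).subtype (· ∈ s)).card = ((F i).filter (· ∈ s)).card := Finset.card_subtype _ _
      _ ≤ (F i).card := Finset.card_filter_le _ _
      _ ≤ ffn G := hF i
  · have key : ∀ t, ∀ v : {x // x ∈ s},
        v ∈ burn G' (fun i => (F i).subtype (· ∈ s)) t → v.1 ∈ burn G F t := by
      intro t
      induction t with
      | zero => intro v _; simp [burn]
      | succ t ih =>
        intro v hv
        simp only [burn, Finset.mem_union, Finset.mem_sdiff] at hv ⊢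
        have hmemF : ∀ w : {x // x ∈ s}, w ∉ (F (t+1)).subtype (· ∈ s) → w.1 ∉ F (t+1) := by
          intro w hw hw'
          exact hw (Finset.mem_subtype.2 hw')
        rcases hv with ⟨hv1, hv2⟩ | hv
        · exact Or.inl ⟨ih v hv1, hmemF v hv2⟩
        · simp only [nbhd, Finset.mem_filter, Finset.mem_univ, true_and,
            Finset.mem_sdiff] at hv
          obtain ⟨hvnot, u, ⟨hu1, hu2⟩, hadj⟩ := hv
          by_cases hc : v.1 ∈ burn G F t \ F (t+1)
          · exact Or.inl (Finset.mem_sdiff.1 hc)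
          · refine Or.inr ?_
            simp only [nbhd, Finset.mem_filter, Finset.mem_univ, true_and]
            exact ⟨hc, u.1, Finset.mem_sdiff.2 ⟨ih u hu1, hmemF u hu2⟩, h u v hadj⟩
    rw [Finset.eq_empty_iff_forall_notMem]
    intro v hv
    have := key T v hv
    rw [hB] at this
    exact absurd this (Finset.notMem_empty _)
end
end

section
/- Let m ∈ ℕ_{>0} and let G be a finite tree (a connected acyclic simple graph) whose diameter is at most 2m − 2. Then ffn(G) ≤ m. -/
open scoped Classical
noncomputable section

variable {V : Type*}

/-! Root the tree at a centre `c`, so that every vertex is within distance `m - 1` of `c`, and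
list the vertices in post-order, so that every subtree is an interval ending at its root. At
time `t + 1` protect the root path of the `t`-th vertex `w`, which has at most `m` vertices.
By induction the fire at time `t` is confined to the vertices from position `t` on: a cleared
vertex can only catch fire from a parent that is not yet cleared, and every such parent lies on
the root path of `w`. -/

lemma mem_nbhd [Fintype V] {G : SimpleGraph V} {S : Finset V} {v : V} :
    v ∈ nbhd G S ↔ v ∉ S ∧ ∃ u ∈ S, G.Adj u v := by
  simp [nbhd]

def sweep {n : ℕ} (e : V ≃ Fin n) (A : V → Finset V) : ℕ → Finset V
  | 0 => ∅
  | t + 1 => if h : t < n then A (e.symm ⟨t, h⟩) else ∅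

lemma sweep_succ {n t : ℕ} {e : V ≃ Fin n} {A : V → Finset V} (ht : t < n) :
    sweep e A (t + 1) = A (e.symm ⟨t, ht⟩) := by
  simp [sweep, ht]

section Sweep

variable {G : SimpleGraph V} {n : ℕ} {e : V ≃ Fin n} {A : V → Finset V}

lemma card_sweep_le {m : ℕ} (hcard : ∀ v, (A v).card ≤ m) (t : ℕ) :
    (sweep e A t).card ≤ m := by
  rcases t with _ | t
  · simp [sweep]
  · by_cases ht : t < n
    · simpa [sweep_succ ht] using hcard _
    · simp [sweep, ht]

theorem le_of_mem_burn_sweep [Fintype V] (hmem : ∀ v, v ∈ A v)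
    (hA : ∀ x z w, G.Adj x z → e z ≤ e w → e w < e x → x ∈ A w) :
    ∀ t ≤ n, ∀ z ∈ burn G (sweep e A) t, t ≤ e z := by
  intro t
  induction t with
  | zero => simp
  | succ t ih =>
    intro ht z hz
    set w := e.symm ⟨t, ht⟩
    have hew : (e w : ℕ) = t := by simp [w]
    rw [burn, sweep_succ ht] at hz
    by_contra! hzt
    rcases Finset.mem_union.1 hz with hz | hz
    · obtain ⟨hzB, hzA⟩ := Finset.mem_sdiff.1 hz
      have hez := ih (Nat.le_of_succ_le ht) z hzB
      have hzw : z = w := e.injective (Fin.ext (by omega))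
      exact hzA (hzw ▸ hmem w)
    · obtain ⟨-, x, hx, hxz⟩ := mem_nbhd.1 hz
      obtain ⟨hxB, hxA⟩ := Finset.mem_sdiff.1 hx
      have hxw : x ≠ w := fun h => hxA (h ▸ hmem w)
      have hex : t < e x := lt_of_le_of_ne (ih (Nat.le_of_succ_le ht) x hxB) fun h =>
        hxw (e.injective (Fin.ext (h.symm.trans hew.symm)))
      exact hxA (hA x z w hxz (by simp only [Fin.le_def]; omega) (by simp only [Fin.lt_def]; omega))

variable (G) in
theorem ffn_le_of_sweep [Fintype V] {m : ℕ} (e : V ≃ Fin n) (A : V → Finset V)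
    (hmem : ∀ v, v ∈ A v) (hcard : ∀ v, (A v).card ≤ m)
    (hA : ∀ x z w, G.Adj x z → e z ≤ e w → e w < e x → x ∈ A w) : ffn G ≤ m := by
  refine Nat.sInf_le ⟨n, sweep e A, card_sweep_le hcard, ?_⟩
  exact Finset.eq_empty_of_forall_notMem fun z hz =>
    (e z).is_lt.not_ge (le_of_mem_burn_sweep hmem hA n le_rfl z hz)

end Sweep

theorem List.prefix_of_lt_of_le_append {α : Type*} [LinearOrder α] :
    ∀ {l w t : List α}, l < w → w ≤ l ++ t → l <+: w
  | [], _, _, _, _ => List.nil_prefix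
  | _ :: _, [], _, h, _ => absurd h (List.not_lt_nil _)
  | x :: l, y :: w, t, h₁, h₂ => by
    rw [List.cons_lt_cons_iff] at h₁
    rw [List.cons_append, ← not_lt, List.cons_lt_cons_iff, not_or, not_and, not_lt,
      not_lt] at h₂
    rcases h₁ with h | ⟨rfl, h⟩
    · exact absurd h h₂.1.not_gt
    · exact List.cons_prefix_cons.2 ⟨rfl, List.prefix_of_lt_of_le_append h (h₂.2 rfl)⟩

namespace SimpleGraph

variable {G : SimpleGraph V}

theorem Walk.dist_add_dist_le_length {u v c : V} (p : G.Walk u v) (hc : c ∈ p.support) :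
    G.dist u c + G.dist c v ≤ p.length := by
  rw [← p.take_spec hc, Walk.length_append]
  exact add_le_add (dist_le _) (dist_le _)

theorem IsAcyclic.support_subset_support {u v : V} (hG : G.IsAcyclic) {p : G.Walk u v}
    (hp : p.IsPath) (q : G.Walk u v) : p.support ⊆ q.support := by
  have : p = q.bypass := congrArg Subtype.val <|
    (hG.subsingleton_path u v).elim ⟨p, hp⟩ ⟨q.bypass, q.bypass_isPath⟩
  exact this ▸ q.support_bypass_subset_support

theorem IsAcyclic.eq_concat_or_eq_concat_of_adj {c x z : V} (hG : G.IsAcyclic) {p : G.Walk c x}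
    {q : G.Walk c z} (hp : p.IsPath) (hq : q.IsPath) (h : G.Adj x z) :
    q = p.concat h ∨ p = q.concat h.symm := by
  by_cases hx : x ∈ q.support
  · exact Or.inl (hG.path_concat hp hq h hx)
  · exact Or.inr (hG.path_concat hq hp h.symm
      (hG.mem_support_of_ne_mem_support_of_adj_of_isPath hp hq h hx))

theorem Walk.eq_of_support_eq {c u v : V} {p : G.Walk c u} {q : G.Walk c v}
    (h : p.support = q.support) : u = v := by
  rw [← p.getLast_support, ← q.getLast_support]
  simp [h]

/-- Order the vertices by their root paths, reversed lexicographically: descendants come before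
their ancestors and every subtree is an interval. -/
theorem IsAcyclic.exists_equiv_fin_mem_support [Fintype V] (hG : G.IsAcyclic) {c : V}
    (P : ∀ v, G.Walk c v) (hP : ∀ v, (P v).IsPath) :
    ∃ e : V ≃ Fin (Fintype.card V),
      ∀ x z w, G.Adj x z → e z ≤ e w → e w < e x → x ∈ (P w).support := by
  let σ := Fintype.equivFin V
  let K : V → List (Fin (Fintype.card V)) := fun v => (P v).support.map σ
  have hK : Function.Injective (fun v => OrderDual.toDual (K v)) := fun u v h =>
    Walk.eq_of_support_eq ((List.map_injective_iff.2 σ.injective) h)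
  let _ : LinearOrder V := LinearOrder.lift' _ hK
  let e := (Fintype.orderIsoFinOfCardEq V rfl).symm
  refine ⟨e.toEquiv, fun x z w h hzw hwx => ?_⟩
  replace hzw : K w ≤ K z := e.le_iff_le.1 hzw
  replace hwx : K x < K w := e.lt_iff_lt.1 hwx
  have hx : σ x ∈ K x := List.mem_map_of_mem (P x).end_mem_support
  rcases hG.eq_concat_or_eq_concat_of_adj (hP x) (hP z) h with hz | hx'
  · have hKz : K z = K x ++ [σ z] := by simp [K, hz, Walk.support_concat]
    have hpre := List.prefix_of_lt_of_le_append hwx (hKz ▸ hzw)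
    simpa [K] using hpre.subset hx
  · have hKx : K x = K z ++ [σ x] := by simp [K, hx', Walk.support_concat]
    exact absurd (hwx.trans_le hzw) (hKx ▸ List.le_append_left)

/-- `c` lies on a diametral path `u ⋯ w` at distance at least `diam - r` from both ends; in a tree
it also lies on every walk from `u` to `w`, hence on a shortest walk from `v` to `u` or to `w`. -/
theorem IsTree.exists_forall_dist_le [Finite V] (hG : G.IsTree) {r : ℕ}
    (hdiam : ∀ u v, G.dist u v ≤ 2 * r) : ∃ c, ∀ v, G.dist c v ≤ r := by
  have := hG.connected.nonempty
  have hmax : ∀ x y, G.dist x y ≤ G.diam := fun _ _ =>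
    dist_le_diam (connected_iff_ediam_ne_top.1 hG.connected)
  obtain ⟨u, w, huw⟩ := G.exists_dist_eq_diam
  obtain ⟨P, hP, hPlen⟩ := hG.connected.exists_path_of_dist u w
  set c := P.getVert (G.diam - r)
  have huc : G.dist u c ≤ G.diam - r := (dist_le (P.take _)).trans (by simp)
  have hcw : G.dist c w ≤ G.diam - (G.diam - r) :=
    (dist_le (P.drop _)).trans (by simp [hPlen, huw])
  have htri : G.dist u w ≤ G.dist u c + G.dist c w := hG.connected.dist_triangle
  have hD := hdiam u w
  refine ⟨c, fun v => ?_⟩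
  obtain ⟨pu, hpu⟩ := hG.connected.exists_walk_length_eq_dist u v
  obtain ⟨pw, hpw⟩ := hG.connected.exists_walk_length_eq_dist v w
  have hc : c ∈ (pu.append pw).support :=
    hG.isAcyclic.support_subset_support hP _ (P.getVert_mem_support _)
  rcases (Walk.mem_support_append_iff _ _).1 hc with hc | hc
  · have := pu.dist_add_dist_le_length hc
    have := hmax u v
    omega
  · have := pw.dist_add_dist_le_length hc
    have := hmax v w
    have := G.dist_comm (u := c) (v := v)
    omega

end SimpleGraph

/-- Upper bound: a tree of diameter at most `2m - 2` satisfies `ffn G ≤ m`. -/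
theorem ffn_le_of_tree_small_diam [Fintype V] (G : SimpleGraph V) (m : ℕ) (hm : 0 < m)
    (htree : G.IsTree) (hdiam : ∀ u v : V, G.dist u v ≤ 2 * m - 2) :
    ffn G ≤ m := by
  obtain ⟨c, hc⟩ := htree.exists_forall_dist_le (r := m - 1) fun u v => by
    have := hdiam u v
    omega
  choose P hP hlen using htree.connected.exists_path_of_dist c
  obtain ⟨e, he⟩ := htree.isAcyclic.exists_equiv_fin_mem_support P hP
  refine ffn_le_of_sweep G e (fun v => (P v).support.toFinset) (fun v => by simp)
    (fun v => ?_) (fun x z w h hzw hwx => List.mem_toFinset.2 (he x z w h hzw hwx))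
  calc (P v).support.toFinset.card ≤ (P v).support.length := List.toFinset_card_le _
    _ = G.dist c v + 1 := by rw [SimpleGraph.Walk.length_support, hlen]
    _ ≤ m := by have := hc v; omega
end
end

section
/- Let G=(V,E) be a finite simple graph, m ∈ ℕ_{>0} and k ∈ ℕ. If there exists a vertex subset V′ ⊆ V with |V′| ≥ |V| − k such that the induced subgraph G[V′] satisfies ffn(G[V′]) ≤ m − k, then ffn(G) ≤ m. -/
open scoped Classical
noncomputable section

variable {V : Type*}

/-!
Protect the vertices of `V'` as a winning strategy for `G[V']` does, and protect every vertex
outside `V'` at every step. Inside `V'` the fire in `G` then never exceeds the fire in `G[V']`,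
since every burning vertex outside `V'` is protected before it can spread; once the fire in
`G[V']` is out, one more step extinguishes the fire in `G`. This uses at most
`ffn G[V'] + |V ∖ V'| ≤ m` firefighters per step.
-/

open Finset Function

section

variable [Fintype V]

theorem union_nbhd_mono (G : SimpleGraph V) {S T : Finset V} (h : S ⊆ T) :
    S ∪ nbhd G S ⊆ T ∪ nbhd G T := by
  intro v hv
  simp only [nbhd, mem_union, mem_filter, mem_univ, true_and] at hv ⊢
  by_cases hvT : v ∈ T
  · exact Or.inl hvT
  · obtain hvS | ⟨-, u, hu, huv⟩ := hv
    · exact absurd (h hvS) hvT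
    · exact Or.inr ⟨hvT, u, h hu, huv⟩

theorem map_union_nbhd_subset_induce (G : SimpleGraph V) (V' : Set V) (S : Finset V') :
    S.map (Embedding.subtype (· ∈ V')) ∪ nbhd G (S.map (Embedding.subtype (· ∈ V'))) ⊆
      (S ∪ nbhd (G.induce V') S).map (Embedding.subtype (· ∈ V')) ∪ V'ᶜ.toFinset := by
  intro v hv
  by_cases hvV' : v ∈ V'
  · simp only [nbhd, mem_union, mem_filter, mem_map, mem_univ, true_and, Embedding.subtype_apply,
      Subtype.exists, exists_and_right, exists_eq_right, Set.mem_toFinset, Set.mem_compl_iff] at hv ⊢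
    refine Or.inl ⟨hvV', ?_⟩
    by_cases hvS : ⟨v, hvV'⟩ ∈ S
    · exact Or.inl hvS
    · obtain ⟨_, hvS'⟩ | ⟨-, u, ⟨huV', huS⟩, huv⟩ := hv
      · exact absurd hvS' hvS
      · exact Or.inr ⟨hvS, u, huV', huS, huv⟩
  · exact mem_union_right _ (Set.mem_toFinset.mpr hvV')

def liftStrategy (V' : Set V) (F' : ℕ → Finset V') (i : ℕ) : Finset V :=
  (F' i).map (Embedding.subtype (· ∈ V')) ∪ V'ᶜ.toFinset

theorem burn_liftStrategy_subset (G : SimpleGraph V) (V' : Set V) (F' : ℕ → Finset V')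
    (t : ℕ) :
    burn G (liftStrategy V' F') t ⊆
      (burn (G.induce V') F' t).map (Embedding.subtype (· ∈ V')) ∪ V'ᶜ.toFinset := by
  induction t with
  | zero =>
    intro v _
    by_cases hv : v ∈ V' <;> simp [burn, hv]
  | succ t ih =>
    have hsurvivors : burn G (liftStrategy V' F') t \ liftStrategy V' F' (t + 1) ⊆
        (burn (G.induce V') F' t \ F' (t + 1)).map (Embedding.subtype (· ∈ V')) := by
      rw [Finset.map_sdiff]
      intro v hv
      simp only [liftStrategy, mem_sdiff, mem_union] at hv ⊢
      have hburning := ih hv.1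
      simp only [mem_union] at hburning
      tauto
    rw [burn, burn]
    -- `convert` reconciles the classical and the subtype `DecidableEq` instances on `V'`.
    convert (union_nbhd_mono G hsurvivors).trans (map_union_nbhd_subset_induce G V' _)

theorem burn_succ_eq_empty_of_subset (G : SimpleGraph V) (F : ℕ → Finset V) {t : ℕ}
    (h : burn G F t ⊆ F (t + 1)) : burn G F (t + 1) = ∅ := by
  simp [burn, sdiff_eq_empty_iff_subset.mpr h, nbhd]

theorem winningStrategy_liftStrategy {G : SimpleGraph V} {V' : Set V} {n T : ℕ}
    {F' : ℕ → Finset V'} (hF' : WinningStrategy (G.induce V') n T F') :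
    WinningStrategy G (n + Fintype.card ↥V'ᶜ) (T + 1) (liftStrategy V' F') := by
  refine ⟨fun i => ?_, burn_succ_eq_empty_of_subset G _ ?_⟩
  · calc (liftStrategy V' F' i).card
        ≤ ((F' i).map (Embedding.subtype (· ∈ V'))).card + V'ᶜ.toFinset.card :=
          card_union_le _ _
      _ ≤ n + Fintype.card ↥V'ᶜ := by
          rw [card_map, Set.toFinset_card]
          exact Nat.add_le_add_right (hF'.1 i) _
  · have := burn_liftStrategy_subset G V' F' T
    rw [hF'.2, map_empty, empty_union] at this
    exact this.trans subset_union_right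

theorem ffn_le_of_winningStrategy {G : SimpleGraph V} {m T : ℕ} {F : ℕ → Finset V}
    (hF : WinningStrategy G m T F) : ffn G ≤ m :=
  Nat.sInf_le ⟨T, F, hF⟩

theorem exists_winningStrategy_ffn (G : SimpleGraph V) :
    ∃ T F, WinningStrategy G (ffn G) T F := by
  refine Nat.sInf_mem (s := {m | ∃ T F, WinningStrategy G m T F})
    ⟨Fintype.card V, 1, fun _ => univ, fun _ => card_le_univ _, ?_⟩
  simp [burn, nbhd]

end

theorem ffn_le_of_induced_general [Fintype V] (G : SimpleGraph V) (m k : ℕ)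
    (V' : Set V) (hcard : Fintype.card V - k ≤ Fintype.card V')
    (hffn : (ffn (G.induce V') : ℤ) ≤ (m : ℤ) - k) :
    ffn G ≤ m := by
  obtain ⟨T, F', hF'⟩ := exists_winningStrategy_ffn (G.induce V')
  have hcompl : Fintype.card ↥V'ᶜ ≤ k := by
    rw [Fintype.card_compl_set]
    omega
  calc ffn G ≤ ffn (G.induce V') + Fintype.card ↥V'ᶜ :=
      ffn_le_of_winningStrategy (winningStrategy_liftStrategy hF')
    _ ≤ m := by omega

/-- Upper bound: if there is a vertex subset `V'` with `|V'| ≥ |V| - k` such that the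
induced subgraph satisfies `ffn ≤ m - k`, then `ffn G ≤ m`. -/
theorem ffn_le_of_induced [Fintype V] (G : SimpleGraph V) (m k : ℕ) (hm : 0 < m)
    (V' : Set V) (hcard : Fintype.card V - k ≤ Fintype.card V')
    (hffn : (ffn (G.induce V') : ℤ) ≤ (m : ℤ) - k) :
    ffn G ≤ m :=
  ffn_le_of_induced_general G m k V' hcard hffn
end
end

section
/- For every n ∈ ℕ with n ≥ 3, the cycle graph C_n on n vertices satisfies ffn(C_n) = 3. -/
open scoped Classical
noncomputable section

variable {V : Type*}

/-!
With at most `δ(G)` firefighters a protected vertex always keeps an unprotected, hence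
burning, neighbour, so the fire is never put out. On `C_n` three firefighters suffice:
one guards the vertex `n - 1` for good, and the other two sweep along `0, 1, …, n - 2`,
always standing on the two lowest burning vertices, so that after `t` rounds only the
vertices `≥ t` can burn.
-/

open Finset SimpleGraph

section Burning

variable [Fintype V] {G : SimpleGraph V} {F : ℕ → Finset V}

theorem mem_burn_succ {t : ℕ} {v : V} :
    v ∈ burn G F (t + 1) ↔
      (v ∈ burn G F t ∧ v ∉ F (t + 1)) ∨
        ∃ u, (u ∈ burn G F t ∧ u ∉ F (t + 1)) ∧ G.Adj u v := by
  simp only [burn, nbhd, mem_union, mem_sdiff, mem_filter, mem_univ, true_and]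
  tauto

theorem burn_eq_univ_of_card_le_degree [DecidableRel G.Adj] {m : ℕ}
    (hF : ∀ i, (F i).card ≤ m) (hdeg : ∀ v, m ≤ G.degree v) (t : ℕ) :
    burn G F t = univ := by
  induction t with
  | zero => rfl
  | succ t ih =>
    refine eq_univ_of_forall fun v => mem_burn_succ.2 ?_
    simp only [ih, mem_univ, true_and]
    by_cases hv : v ∈ F (t + 1)
    · right
      by_contra! hnbr
      have hsub : insert v (G.neighborFinset v) ⊆ F (t + 1) :=
        insert_subset hv fun u hu =>
          by_contra fun hu' => hnbr u hu' ((G.mem_neighborFinset v u).1 hu).symm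
      have hcard := (card_le_card hsub).trans (hF (t + 1))
      rw [card_insert_of_notMem (by simp), card_neighborFinset_eq_degree] at hcard
      exact absurd (hdeg v) (by omega)
    · exact .inl hv

theorem ffn_eq_succ_of_le_degree [Nonempty V] [DecidableRel G.Adj] {m T : ℕ}
    (hdeg : ∀ v, m ≤ G.degree v) (hwin : WinningStrategy G (m + 1) T F) :
    ffn G = m + 1 := by
  refine le_antisymm (Nat.sInf_le ⟨T, F, hwin⟩) (le_csInf ⟨m + 1, T, F, hwin⟩ ?_)
  rintro k ⟨T', F', hF', hburn⟩
  by_contra! hk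
  have huniv := burn_eq_univ_of_card_le_degree (fun i => (hF' i).trans (Nat.le_of_lt_succ hk))
    hdeg T'
  exact univ_nonempty.ne_empty (huniv.symm.trans hburn)

end Burning

theorem cycleGraph_adj_iff_val {n : ℕ} {u v : Fin (n + 2)} :
    (cycleGraph (n + 2)).Adj u v ↔ u.val + 1 = v.val ∨ v.val + 1 = u.val ∨
      (u.val = 0 ∧ v.val = n + 1) ∨ (u.val = n + 1 ∧ v.val = 0) := by
  have hu := u.isLt
  have hv := v.isLt
  rw [cycleGraph_adj']
  rcases lt_trichotomy u v with h | rfl | h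
  · rw [Fin.coe_sub_iff_lt.2 h, Fin.coe_sub_iff_le.2 h.le]
    rw [Fin.lt_def] at h
    omega
  · simp only [sub_self, Fin.val_zero]
    omega
  · rw [Fin.coe_sub_iff_le.2 h.le, Fin.coe_sub_iff_lt.2 h]
    rw [Fin.lt_def] at h
    omega

def cycleSweep (n i : ℕ) : Finset (Fin (n + 2)) :=
  univ.filter fun v => v.val + 1 = i ∨ v.val = i ∨ v.val = n + 1

theorem card_cycleSweep_le (n i : ℕ) : (cycleSweep n i).card ≤ 3 :=
  calc (cycleSweep n i).card = ((cycleSweep n i).map Fin.valEmbedding).card := (card_map _).symm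
    _ ≤ ({i - 1, i, n + 1} : Finset ℕ).card :=
      card_le_card fun x => by simp only [cycleSweep, mem_map, mem_filter, mem_univ, true_and,
        Fin.valEmbedding_apply, mem_insert, mem_singleton]; omega
    _ ≤ 3 := card_le_three

theorem le_val_of_mem_burn_cycleSweep {n t : ℕ} {v : Fin (n + 2)}
    (hv : v ∈ burn (cycleGraph (n + 2)) (cycleSweep n) t) : t ≤ v.val := by
  induction t generalizing v with
  | zero => exact Nat.zero_le _
  | succ t ih =>
    have hunguarded : ∀ u, u ∈ burn (cycleGraph (n + 2)) (cycleSweep n) t ∧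
        u ∉ cycleSweep n (t + 1) → t + 2 ≤ u.val ∧ u.val ≤ n := fun u hu => by
      simp only [cycleSweep, mem_filter, mem_univ, true_and] at hu
      have := ih hu.1
      have := u.isLt
      omega
    rcases mem_burn_succ.1 hv with hv | ⟨u, hu, hadj⟩
    · have := hunguarded v hv
      omega
    · have := hunguarded u hu
      have := cycleGraph_adj_iff_val.1 hadj
      omega

theorem winningStrategy_cycleSweep (n : ℕ) :
    WinningStrategy (cycleGraph (n + 2)) 3 (n + 2) (cycleSweep n) :=
  ⟨card_cycleSweep_le n, eq_empty_of_forall_notMem fun v hv =>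
    (le_val_of_mem_burn_cycleSweep hv).not_gt v.isLt⟩

/-- The firefighter number of the cycle graph `C_n` (with `n ≥ 3`) is `3`. -/
theorem ffn_cycleGraph (n : ℕ) (hn : 3 ≤ n) :
    ffn (SimpleGraph.cycleGraph n) = 3 := by
  obtain ⟨k, rfl⟩ := Nat.exists_eq_add_of_le' hn
  exact ffn_eq_succ_of_le_degree (fun _ => cycleGraph_degree_three_le.ge)
    (winningStrategy_cycleSweep (k + 1))

end
end

section
/- Every finite forest F = (V, E) (an acyclic simple graph) satisfies ffn(F) ≤ log₃(2|V| + 1) + 2, where the right-hand side is a real number and the inequality is between the natural number ffn(F), coerced to ℝ, and this real value. -/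
open scoped Classical
noncomputable section

variable {V : Type*}

/-!
Firefighters who occupy the bags of a path decomposition one after another win: by the interval
property the fire never re-enters a vertex whose bags have all been passed. So it suffices that a
forest on `n` vertices has a path decomposition with bags of at most `k + 1` vertices whenever
`2n + 1 ≤ 3 ^ k`, which is proved by induction on `k`. Call a component large if `2|C| ≥ 3 ^ k`.
At a centroid of a tree at most two components are large, and inside a large component each
vertex has at most one large component ahead of it; this yields a spine through the tree off which
every component is small. Walking along the spine, each spine vertex joins all bags of the
level-`k` decompositions of the small components hanging from it, and consecutive spine vertices
share a bag of size two.
-/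

open Finset

namespace SimpleGraph

/-! ### Components inside a finset -/

variable (G : SimpleGraph V)

/-- The induced subgraph `G[A]`, kept on the vertex type `V` (vertices outside `A` are isolated),
so that reachability inside different finsets can be compared. -/
def restrict (A : Finset V) : SimpleGraph V where
  Adj u v := u ∈ A ∧ v ∈ A ∧ G.Adj u v
  symm := ⟨fun _ _ h => ⟨h.2.1, h.1, h.2.2.symm⟩⟩
  loopless := ⟨fun _ h => G.irrefl h.2.2⟩

def componentIn (S : Finset V) (u : V) : Finset V :=
  S.filter ((G.restrict S).Reachable u)

def ConnectedOn (A : Finset V) : Prop :=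
  ∀ u ∈ A, ∀ v ∈ A, (G.restrict A).Reachable u v

variable {G} {A B S T : Finset V} {a b c r u v w x y z : V} {s e s₁ e₁ s₂ e₂ : V → ℕ}
  {k m N i : ℕ}

theorem restrict_mono (h : A ⊆ S) : G.restrict A ≤ G.restrict S :=
  fun _ _ huv => ⟨h huv.1, h huv.2.1, huv.2.2⟩

theorem restrict_le : G.restrict A ≤ G := fun _ _ huv => huv.2.2

theorem mem_componentIn : v ∈ G.componentIn S u ↔ v ∈ S ∧ (G.restrict S).Reachable u v :=
  mem_filter

theorem componentIn_subset : G.componentIn S u ⊆ S := filter_subset _ _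

theorem self_mem_componentIn (hu : u ∈ S) : u ∈ G.componentIn S u :=
  mem_componentIn.2 ⟨hu, .rfl⟩

theorem componentIn_eq_of_mem (hv : v ∈ G.componentIn S u) :
    G.componentIn S v = G.componentIn S u := by
  have huv := (mem_componentIn.1 hv).2
  ext w
  simp only [mem_componentIn]
  exact and_congr_right fun _ => ⟨huv.trans, huv.symm.trans⟩

theorem componentIn_eq_of_mem_of_mem (hu : w ∈ G.componentIn S u) (hv : w ∈ G.componentIn S v) :
    G.componentIn S u = G.componentIn S v :=
  (componentIn_eq_of_mem hu).symm.trans (componentIn_eq_of_mem hv)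

theorem mem_componentIn_of_adj (hx : x ∈ G.componentIn S u) (hy : y ∈ S) (hxy : G.Adj x y) :
    y ∈ G.componentIn S u := by
  obtain ⟨hxS, hux⟩ := mem_componentIn.1 hx
  exact mem_componentIn.2 ⟨hy, hux.trans (Adj.reachable ⟨hxS, hy, hxy⟩)⟩

/-- A path inside `S` starting at `u` never leaves the component of `u`, so it also runs inside
any `T` containing that component. -/
theorem Reachable.restrict_of_componentIn_subset (h : G.componentIn S u ⊆ T)
    (huv : (G.restrict S).Reachable u v) : (G.restrict T).Reachable u v := by
  rw [reachable_iff_reflTransGen] at huv ⊢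
  induction huv with
  | refl => rfl
  | tail hub hbc ih =>
    have hub := (reachable_iff_reflTransGen _ _).2 hub
    exact ih.tail ⟨h (mem_componentIn.2 ⟨hbc.1, hub⟩),
      h (mem_componentIn.2 ⟨hbc.2.1, hub.trans hbc.reachable⟩), hbc.2.2⟩

theorem componentIn_eq_of_subset (hTS : T ⊆ S) (h : G.componentIn S u ⊆ T) :
    G.componentIn T u = G.componentIn S u := by
  ext v
  simp only [mem_componentIn]
  exact ⟨fun ⟨hv, huv⟩ => ⟨hTS hv, huv.mono (restrict_mono hTS)⟩,
    fun ⟨hv, huv⟩ =>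
      ⟨h (mem_componentIn.2 ⟨hv, huv⟩), huv.restrict_of_componentIn_subset h⟩⟩

theorem componentIn_sdiff (hT : ∀ v ∈ T, G.componentIn S v ⊆ T) (hu : u ∈ S \ T) :
    G.componentIn (S \ T) u = G.componentIn S u := by
  refine componentIn_eq_of_subset sdiff_subset fun v hv =>
    mem_sdiff.2 ⟨componentIn_subset hv, ?_⟩
  intro hvT
  have huv : u ∈ G.componentIn S v := by
    rw [componentIn_eq_of_mem hv]
    exact self_mem_componentIn (mem_sdiff.1 hu).1
  exact (mem_sdiff.1 hu).2 (hT v hvT huv)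

theorem connectedOn_componentIn : G.ConnectedOn (G.componentIn S u) := by
  intro x hx y hy
  have hxy := (mem_componentIn.1 hx).2.symm.trans (mem_componentIn.1 hy).2
  exact hxy.restrict_of_componentIn_subset (componentIn_eq_of_mem hx).le

theorem componentIn_eq_of_card_lt (hu : G.componentIn S u ⊆ T) (hv : G.componentIn S v ⊆ T)
    (h : #T < #(G.componentIn S u) + #(G.componentIn S v)) :
    G.componentIn S u = G.componentIn S v := by
  by_contra hne
  have hdisj : Disjoint (G.componentIn S u) (G.componentIn S v) :=
    Finset.disjoint_left.2 fun w hwu hwv => hne (componentIn_eq_of_mem_of_mem hwu hwv)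
  have := card_le_card (union_subset hu hv)
  rw [card_union_of_disjoint hdisj] at this
  omega

theorem ConnectedOn.exists_adj_mem_componentIn (hA : G.ConnectedOn A) (hx : x ∈ A)
    (hu : u ∈ A.erase x) :
    ∃ y, G.Adj x y ∧ y ∈ A.erase x ∧ u ∈ G.componentIn (A.erase x) y := by
  have hux := hA u (mem_of_mem_erase hu) x hx
  rw [reachable_iff_reflTransGen] at hux
  revert hu
  induction hux using Relation.ReflTransGen.head_induction_on with
  | refl => exact fun hu => absurd rfl (ne_of_mem_erase hu)
  | @head u w huw _ ih =>
    intro hu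
    by_cases hwx : w = x
    · subst hwx
      exact ⟨u, huw.2.2.symm, hu, self_mem_componentIn hu⟩
    · obtain ⟨y, hxy, hy, hwy⟩ := ih (mem_erase.2 ⟨hwx, huw.2.1⟩)
      exact ⟨y, hxy, hy, mem_componentIn_of_adj hwy hu huw.2.2.symm⟩

theorem ConnectedOn.sdiff_componentIn (hA : G.ConnectedOn A) (hx : x ∈ A) :
    G.ConnectedOn (A \ G.componentIn (A.erase x) u) := by
  set C := G.componentIn (A.erase x) u
  have hxC : x ∈ A \ C := mem_sdiff.2 ⟨hx, fun h => notMem_erase x A (componentIn_subset h)⟩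
  suffices h : ∀ z ∈ A \ C, (G.restrict (A \ C)).Reachable x z from
    fun z hz z' hz' => (h z hz).symm.trans (h z' hz')
  intro z hz
  obtain ⟨hzA, hzC⟩ := mem_sdiff.1 hz
  by_cases hzx : z = x
  · rw [hzx]
  obtain ⟨y, hxy, hy, hzy⟩ := hA.exists_adj_mem_componentIn hx (mem_erase.2 ⟨hzx, hzA⟩)
  have hsub : G.componentIn (A.erase x) y ⊆ A \ C := fun w hw => by
    refine mem_sdiff.2 ⟨mem_of_mem_erase (componentIn_subset hw), fun hwC => hzC ?_⟩
    rw [componentIn_eq_of_mem_of_mem hw hwC] at hzy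
    exact hzy
  have hxy' : (G.restrict (A \ C)).Adj x y := ⟨hxC, hsub (self_mem_componentIn hy), hxy⟩
  exact hxy'.reachable.trans
    ((mem_componentIn.1 hzy).2.restrict_of_componentIn_subset hsub)

/-! ### Forests -/

/-- Every edge of a forest is a bridge, so a route from `a` to `b` through `z` must use the edge
`ab` itself. -/
theorem IsAcyclic.mem_or_mem_of_adj (hG : G.IsAcyclic) (hab : G.Adj a b)
    (haz : (G.restrict A).Reachable a z) (hzb : (G.restrict B).Reachable z b) :
    b ∈ A ∨ a ∈ B := by
  obtain ⟨p⟩ := haz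
  obtain ⟨q⟩ := hzb
  have hmem := isBridge_iff_forall_walk_mem_edges.1 (isAcyclic_iff_forall_adj_isBridge.1 hG hab)
    ((p.mapLe restrict_le).append (q.mapLe restrict_le))
  rw [Walk.edges_append, List.mem_append, Walk.edges_mapLe_eq_edges,
    Walk.edges_mapLe_eq_edges] at hmem
  rcases hmem with h | h
  · exact Or.inl (p.edges_subset_edgeSet h).2.1
  · exact Or.inr (q.edges_subset_edgeSet h).1

theorem IsAcyclic.eq_of_adj_of_mem_componentIn (hG : G.IsAcyclic) (hx : G.Adj r x)
    (hy : G.Adj r y) (h : y ∈ G.componentIn (A.erase r) x) : y = x := by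
  by_contra hyx
  have hry : (G.restrict {r, y}).Reachable r y := Adj.reachable ⟨by simp, by simp, hy⟩
  rcases hG.mem_or_mem_of_adj hx hry (mem_componentIn.1 h).2.symm with h | h
  · rcases mem_insert.1 h with h | h
    · exact G.irrefl (h ▸ hx)
    · exact hyx (mem_singleton.1 h).symm
  · exact notMem_erase r A h

theorem IsAcyclic.card_componentIn_erase_lt (hG : G.IsAcyclic) (hA : G.ConnectedOn A)
    (hc : c ∈ A) (hcr : G.Adj c r) (hr : r ∈ A.erase c)
    (hbig : #A < 2 * #(G.componentIn (A.erase c) r)) :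
    #(G.componentIn (A.erase r) w) < #(G.componentIn (A.erase c) r) := by
  have hcr' : c ∈ A.erase r := mem_erase.2 ⟨hcr.ne, hc⟩
  by_cases hcD : c ∈ G.componentIn (A.erase r) w
  · rw [← componentIn_eq_of_mem hcD]
    have hdisj : Disjoint (G.componentIn (A.erase r) c) (G.componentIn (A.erase c) r) := by
      refine Finset.disjoint_left.2 fun x hxD hxC => ?_
      rcases hG.mem_or_mem_of_adj hcr (mem_componentIn.1 hxD).2 (mem_componentIn.1 hxC).2.symm
        with h | h
      · exact notMem_erase r A h
      · exact notMem_erase c A h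
    have hDC : #(G.componentIn (A.erase r) c ∪ G.componentIn (A.erase c) r) ≤ #A :=
      card_le_card (union_subset (componentIn_subset.trans (erase_subset r A))
        (componentIn_subset.trans (erase_subset c A)))
    rw [card_union_of_disjoint hdisj] at hDC
    omega
  · have hDC : G.componentIn (A.erase r) w ⊆ (G.componentIn (A.erase c) r).erase r := by
      intro x hxD
      obtain ⟨hxr, hxA⟩ := mem_erase.1 (componentIn_subset hxD)
      refine mem_erase.2 ⟨hxr, ?_⟩
      by_contra hxC
      obtain ⟨y, hcy, hy, hxy⟩ :=
        hA.exists_adj_mem_componentIn hc (mem_erase.2 ⟨fun h => hcD (h ▸ hxD), hxA⟩)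
      -- the component of `x` at `c` avoids `r`, so `x` is reachable from `c` inside `A \ {r}`
      have hsub : G.componentIn (A.erase c) y ⊆ A.erase r := fun z hz => by
        refine mem_erase.2 ⟨?_, mem_of_mem_erase (componentIn_subset hz)⟩
        rintro rfl
        rw [← componentIn_eq_of_mem hz] at hxy
        exact hxC hxy
      have hcy' : (G.restrict (A.erase r)).Adj c y :=
        ⟨hcr', hsub (self_mem_componentIn hy), hcy⟩
      have hcx := hcy'.reachable.trans
        ((mem_componentIn.1 hxy).2.restrict_of_componentIn_subset hsub)
      exact hcD (mem_componentIn.2 ⟨hcr', (mem_componentIn.1 hxD).2.trans hcx.symm⟩)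
    have hD := card_le_card hDC
    rw [card_erase_of_mem (self_mem_componentIn hr)] at hD
    have : 0 < #(G.componentIn (A.erase c) r) := card_pos.2 ⟨r, self_mem_componentIn hr⟩
    omega

theorem IsAcyclic.exists_centroid (hG : G.IsAcyclic) (hA : G.ConnectedOn A) (hne : A.Nonempty) :
    ∃ c ∈ A, ∀ u ∈ A.erase c, 2 * #(G.componentIn (A.erase c) u) ≤ #A := by
  obtain ⟨c, hc, hmin⟩ :=
    A.exists_min_image (fun c => (A.erase c).sup fun u => #(G.componentIn (A.erase c) u)) hne
  refine ⟨c, hc, fun u hu => ?_⟩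
  by_contra! hbig
  obtain ⟨r, hcr, hr, hur⟩ := hA.exists_adj_mem_componentIn hc hu
  rw [componentIn_eq_of_mem hur] at hbig
  have hlt : ((A.erase r).sup fun w => #(G.componentIn (A.erase r) w)) <
      #(G.componentIn (A.erase c) r) :=
    (Finset.sup_lt_iff (card_pos.2 ⟨r, self_mem_componentIn hr⟩)).2 fun _ _ =>
      hG.card_componentIn_erase_lt hA hc hcr hr hbig
  have hle : #(G.componentIn (A.erase c) r) ≤
      (A.erase c).sup fun u => #(G.componentIn (A.erase c) u) :=
    le_sup (f := fun u => #(G.componentIn (A.erase c) u)) hr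
  exact absurd (hmin r (mem_of_mem_erase hr)) (by omega)

/-! ### Path decompositions -/

def bag (A : Finset V) (start finish : V → ℕ) (i : ℕ) : Finset V :=
  A.filter fun v => start v ≤ i ∧ i ≤ finish v

@[simp]
theorem mem_bag : v ∈ bag A s e i ↔ v ∈ A ∧ s v ≤ i ∧ i ≤ e v := mem_filter

/-- A path decomposition of `G[A]` with bags of at most `m` vertices, in interval form: the vertex
`v` lies in the bags `i` with `start v ≤ i ≤ finish v`. -/
structure IsPathDecomposition (G : SimpleGraph V) (A : Finset V) (m : ℕ)
    (start finish : V → ℕ) : Prop where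
  start_le_finish : ∀ v ∈ A, start v ≤ finish v
  start_le_finish_of_adj : ∀ u ∈ A, ∀ v ∈ A, G.Adj u v → start u ≤ finish v
  card_bag_le : ∀ i, #(bag A start finish i) ≤ m

theorem isPathDecomposition_empty : G.IsPathDecomposition ∅ m s e :=
  ⟨by simp, by simp, by simp [bag]⟩

theorem IsPathDecomposition.bag_reverse_subset (h : G.IsPathDecomposition A m s e)
    (hN : ∀ v ∈ A, e v ≤ N) :
    bag A (fun v => N - e v) (fun v => N - s v) i ⊆ bag A s e (N - i) := by
  intro v hv
  rw [mem_bag] at hv ⊢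
  have := h.start_le_finish v hv.1
  have := hN v hv.1
  exact ⟨hv.1, by omega, by omega⟩

theorem IsPathDecomposition.reverse (h : G.IsPathDecomposition A m s e)
    (hN : ∀ v ∈ A, e v ≤ N) :
    G.IsPathDecomposition A m (fun v => N - e v) (fun v => N - s v) where
  start_le_finish v hv := by
    have := h.start_le_finish v hv
    omega
  start_le_finish_of_adj u hu v hv huv := by
    have := h.start_le_finish_of_adj v hv u hu huv.symm
    omega
  card_bag_le i := (card_le_card (h.bag_reverse_subset hN)).trans (h.card_bag_le _)

/-- Run the decomposition of `B` after that of `A`, with its first bag merged into bag `N` of the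
decomposition of `A`; edges between `A` and `B` must meet there. -/
theorem IsPathDecomposition.exists_append (h₁ : G.IsPathDecomposition A m s₁ e₁)
    (h₂ : G.IsPathDecomposition B m s₂ e₂) (hN : ∀ v ∈ A, e₁ v ≤ N)
    (hcross : ∀ u ∈ A, ∀ v ∈ B, G.Adj u v →
      u ∈ bag A s₁ e₁ N ∧ v ∈ bag B s₂ e₂ 0)
    (hbag : #(bag A s₁ e₁ N) + #(bag B s₂ e₂ 0) ≤ m) :
    ∃ s e, G.IsPathDecomposition (A ∪ B) m s e ∧
      ∀ i < N, bag (A ∪ B) s e i = bag A s₁ e₁ i := by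
  let s v := if v ∈ A then s₁ v else s₂ v + N
  let e v := if v ∈ A then e₁ v else e₂ v + N
  have hlow : ∀ i < N, bag (A ∪ B) s e i = bag A s₁ e₁ i := by
    intro i hi
    ext v
    by_cases hv : v ∈ A
    · simp [s, e, hv]
    · simp only [mem_bag, mem_union, hv, s, e, if_false, false_or, false_and, iff_false]
      omega
  refine ⟨s, e, ⟨fun v hv => ?_, fun u hu v hv huv => ?_, fun i => ?_⟩, hlow⟩
  · by_cases hvA : v ∈ A
    · simpa [s, e, hvA] using h₁.start_le_finish v hvA
    · simpa [s, e, hvA] using h₂.start_le_finish v ((mem_union.1 hv).resolve_left hvA)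
  · by_cases huA : u ∈ A <;> by_cases hvA : v ∈ A
    · simpa [s, e, huA, hvA] using h₁.start_le_finish_of_adj u huA v hvA huv
    · have := h₁.start_le_finish u huA
      have := hN u huA
      simp only [s, e, huA, hvA, if_true, if_false]
      omega
    · have := hcross v hvA u ((mem_union.1 hu).resolve_left huA) huv.symm
      simp only [mem_bag] at this
      simp only [s, e, huA, hvA, if_true, if_false]
      omega
    · simpa [s, e, huA, hvA] using h₂.start_le_finish_of_adj
        u ((mem_union.1 hu).resolve_left huA) v ((mem_union.1 hv).resolve_left hvA) huv
  · rcases lt_trichotomy i N with hi | rfl | hi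
    · rw [hlow i hi]
      exact h₁.card_bag_le i
    · refine (card_le_card fun v hv => ?_).trans ((card_union_le _ _).trans hbag)
      by_cases hvA : v ∈ A
      · have := hN v hvA
        simp_all [s, e]
      · simp_all [s, e]
    · refine (card_le_card fun v hv => ?_).trans (h₂.card_bag_le (i - N))
      by_cases hvA : v ∈ A
      · have := hN v hvA
        simp only [mem_bag, mem_union, hvA, s, e, if_true, true_or, true_and] at hv
        omega
      · simp only [mem_bag, mem_union, hvA, s, e, if_false, false_or] at hv
        exact mem_bag.2 ⟨hv.1, by omega, by omega⟩

/-- Add a hub `r` to every bag, with an extra bag `{r}` at each end. -/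
theorem IsPathDecomposition.exists_insert (h : G.IsPathDecomposition A m s e) (hr : r ∉ A) :
    ∃ s' e' N, G.IsPathDecomposition (insert r A) (m + 1) s' e' ∧
      bag (insert r A) s' e' 0 = {r} ∧ (∀ v ∈ insert r A, e' v ≤ N + 1) ∧
      bag (insert r A) s' e' (N + 1) = {r} := by
  have heN : ∀ v ∈ A, e v ≤ A.sup e := fun v hv => le_sup hv
  have hne : ∀ v ∈ A, v ≠ r := fun v hv hvr => hr (hvr ▸ hv)
  refine ⟨fun v => if v = r then 0 else s v + 1,
    fun v => if v = r then A.sup e + 2 else e v + 1, A.sup e + 1,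
    ⟨fun v hv => ?_, fun u hu v hv huv => ?_, fun i => ?_⟩, ?_, fun v hv => ?_, ?_⟩
  · rcases mem_insert.1 hv with rfl | hvA
    · simp
    · simpa [hne v hvA] using h.start_le_finish v hvA
  · rcases mem_insert.1 hu with rfl | huA
    · simp
    rcases mem_insert.1 hv with rfl | hvA
    · have := h.start_le_finish u huA
      have := heN u huA
      simp only [hne u huA, if_true, if_false]
      omega
    · simpa [hne u huA, hne v hvA] using h.start_le_finish_of_adj u huA v hvA huv
  · refine (card_le_card fun v hv => ?_).trans ((card_insert_le r _).trans
      (Nat.add_le_add_right (h.card_bag_le (i - 1)) 1))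
    rw [mem_bag, mem_insert] at hv
    rw [mem_insert, mem_bag]
    by_cases hvr : v = r
    · exact Or.inl hvr
    · simp only [hvr, if_false, false_or] at hv
      exact Or.inr ⟨hv.1, by omega, by omega⟩
  · ext v
    by_cases hvr : v = r
    · simp [hvr]
    · simp [hvr]
  · rcases mem_insert.1 hv with rfl | hvA
    · simp
    · have := heN v hvA
      simp only [hne v hvA, if_false]
      omega
  · ext v
    by_cases hvr : v = r
    · simp [hvr]
    · simp only [mem_bag, mem_insert, hvr, if_false, false_or, mem_singleton, iff_false, not_and]
      intro hv _
      have := heN v hv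
      omega

theorem exists_isPathDecomposition_of_forall_componentIn
    (h : ∀ u ∈ S, ∃ s e, G.IsPathDecomposition (G.componentIn S u) m s e) :
    ∃ s e, G.IsPathDecomposition S m s e := by
  induction S using Finset.strongInduction with
  | H S ih =>
  rcases S.eq_empty_or_nonempty with rfl | ⟨x, hx⟩
  · exact ⟨0, 0, isPathDecomposition_empty⟩
  have hC : ∀ v ∈ G.componentIn S x, G.componentIn S v ⊆ G.componentIn S x :=
    fun v hv => (componentIn_eq_of_mem hv).le
  obtain ⟨s₁, e₁, h₁⟩ := h x hx
  obtain ⟨s₂, e₂, h₂⟩ := ih (S \ G.componentIn S x)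
    (sdiff_ssubset componentIn_subset ⟨x, self_mem_componentIn hx⟩)
    fun u hu => componentIn_sdiff hC hu ▸ h u (mem_sdiff.1 hu).1
  have hempty : bag (G.componentIn S x) s₁ e₁ ((G.componentIn S x).sup e₁ + 1) = ∅ := by
    refine eq_empty_of_forall_notMem fun v hv => ?_
    rw [mem_bag] at hv
    have := le_sup (f := e₁) hv.1
    omega
  obtain ⟨s, e, hS, -⟩ := h₁.exists_append h₂
    (fun v hv => (le_sup hv).trans (Nat.le_succ _))
    (fun u hu v hv huv =>
      absurd (mem_componentIn_of_adj hu (mem_sdiff.1 hv).1 huv) (mem_sdiff.1 hv).2)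
    (by rw [hempty, card_empty, zero_add]; exact h₂.card_bag_le 0)
  rw [union_sdiff_of_subset componentIn_subset] at hS
  exact ⟨s, e, hS⟩

theorem ffn_le_of_isPathDecomposition [Fintype V] (h : G.IsPathDecomposition univ m s e) :
    ffn G ≤ m := by
  let F t := bag univ s e (t - 1)
  -- at time `t` the fire is confined to vertices whose interval has not ended before `t`
  have hburn : ∀ t, ∀ v ∈ burn G F t, t ≤ e v := by
    intro t
    induction t with
    | zero => simp
    | succ t ih =>
      have hsafe : ∀ u ∈ burn G F t \ F (t + 1), t < s u := by
        intro u hu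
        rw [mem_sdiff] at hu
        have := ih u hu.1
        simp only [F, mem_bag, mem_univ, true_and, Nat.add_sub_cancel, not_and, not_le] at hu
        omega
      intro v hv
      rcases mem_union.1 hv with hv | hv
      · have := hsafe v hv
        have := h.start_le_finish v (mem_univ v)
        omega
      · obtain ⟨-, -, u, hu, huv⟩ := mem_filter.1 hv
        have := hsafe u hu
        have := h.start_le_finish_of_adj u (mem_univ u) v (mem_univ v) huv
        omega
  have hT : burn G F (univ.sup e + 1) = ∅ := eq_empty_of_forall_notMem fun v hv => by
    have := hburn _ v hv
    have := le_sup (f := e) (mem_univ v)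
    omega
  exact Nat.sInf_le ⟨_, F, fun i => h.card_bag_le _, hT⟩

/-! ### Forests on at most `(3 ^ k - 1) / 2` vertices -/

def largePart (G : SimpleGraph V) (k : ℕ) (S : Finset V) : Finset V :=
  S.filter fun u => 3 ^ k < 2 * #(G.componentIn S u) + 1

theorem componentIn_subset_largePart (hu : u ∈ G.largePart k S) :
    G.componentIn S u ⊆ G.largePart k S := by
  intro v hv
  rw [largePart, mem_filter] at hu ⊢
  exact ⟨componentIn_subset hv, (componentIn_eq_of_mem hv).symm ▸ hu.2⟩

theorem largePart_eq_componentIn (h : #(G.largePart k S) ≤ 3 ^ k) (hu : u ∈ G.largePart k S) :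
    G.largePart k S = G.componentIn S u := by
  refine Subset.antisymm (fun v hv => ?_) (componentIn_subset_largePart hu)
  obtain ⟨t, ht⟩ : Odd (3 ^ k) := Odd.pow (by decide)
  have hvu := componentIn_eq_of_card_lt (componentIn_subset_largePart hv)
    (componentIn_subset_largePart hu) (by
      have := (mem_filter.1 hu).2
      have := (mem_filter.1 hv).2
      omega)
  exact hvu ▸ self_mem_componentIn (mem_filter.1 hv).1

theorem exists_isPathDecomposition_sdiff_largePart
    (hsmall : ∀ {B : Finset V}, G.ConnectedOn B → 2 * #B + 1 ≤ 3 ^ k →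
      ∃ s e, G.IsPathDecomposition B (k + 1) s e) :
    ∃ s e, G.IsPathDecomposition (S \ G.largePart k S) (k + 1) s e := by
  refine exists_isPathDecomposition_of_forall_componentIn fun u hu => ?_
  rw [componentIn_sdiff (fun v => componentIn_subset_largePart) hu]
  refine hsmall connectedOn_componentIn (not_lt.1 fun h => ?_)
  exact (mem_sdiff.1 hu).2 (mem_filter.2 ⟨(mem_sdiff.1 hu).1, h⟩)

/-- The small components at `r` hang off `r`; the large one, if any, is handled recursively from
the neighbour of `r` inside it. -/
theorem IsAcyclic.exists_anchored (hG : G.IsAcyclic)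
    (hsmall : ∀ {B : Finset V}, G.ConnectedOn B → 2 * #B + 1 ≤ 3 ^ k →
      ∃ s e, G.IsPathDecomposition B (k + 1) s e)
    (hA : G.ConnectedOn A) (hr : r ∈ A) (hlarge : #(G.largePart k (A.erase r)) ≤ 3 ^ k) :
    ∃ s e, G.IsPathDecomposition A (k + 2) s e ∧ bag A s e 0 = {r} := by
  induction A using Finset.strongInduction generalizing r with
  | H A ih =>
  have hrS : r ∉ A.erase r := notMem_erase r A
  obtain ⟨s₀, e₀, h₀⟩ :=
    exists_isPathDecomposition_sdiff_largePart (S := A.erase r) hsmall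
  obtain ⟨s₁, e₁, N, h₁, h₁0, h₁N, h₁last⟩ :=
    h₀.exists_insert fun h => hrS (mem_sdiff.1 h).1
  rcases (G.largePart k (A.erase r)).eq_empty_or_nonempty with hL | ⟨u, hu⟩
  · rw [hL, sdiff_empty, insert_erase hr] at h₁ h₁0
    exact ⟨s₁, e₁, h₁, h₁0⟩
  obtain ⟨r', hrr', hr', hur'⟩ := hA.exists_adj_mem_componentIn hr (mem_filter.1 hu).1
  have hLC : G.largePart k (A.erase r) = G.componentIn (A.erase r) r' :=
    (largePart_eq_componentIn hlarge hu).trans (componentIn_eq_of_mem hur')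
  obtain ⟨s₂, e₂, h₂, h₂0⟩ := ih _ (componentIn_subset.trans_ssubset (erase_ssubset hr))
    connectedOn_componentIn (self_mem_componentIn hr') (by
      calc #(G.largePart k ((G.componentIn (A.erase r) r').erase r'))
          ≤ #((G.componentIn (A.erase r) r').erase r') := card_le_card (filter_subset _ _)
        _ ≤ #(G.componentIn (A.erase r) r') := card_erase_le
        _ ≤ 3 ^ k := hLC ▸ hlarge)
  rw [hLC] at h₁ h₁0 h₁N h₁last
  obtain ⟨s, e, h, hlow⟩ := h₁.exists_append h₂ h₁N
    (fun u hu v hv huv => by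
      rw [h₁last, h₂0, mem_singleton, mem_singleton]
      rcases mem_insert.1 hu with rfl | hu
      · exact ⟨rfl, hG.eq_of_adj_of_mem_componentIn hrr' huv hv⟩
      · exact absurd (mem_componentIn_of_adj hv (mem_sdiff.1 hu).1 huv.symm) (mem_sdiff.1 hu).2)
    (by rw [h₁last, h₂0, card_singleton, card_singleton]; omega)
  rw [insert_union, sdiff_union_of_subset componentIn_subset, insert_erase hr] at h hlow
  exact ⟨s, e, h, (hlow 0 N.succ_pos).trans h₁0⟩

/-- Joining, along the edge `cr`, the reversed anchored decomposition of the component of `r` at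
`c` to an anchored decomposition of the rest. -/
theorem IsAcyclic.exists_join (hG : G.IsAcyclic) (hcr : G.Adj c r) (hm : 2 ≤ m)
    (h₁ : G.IsPathDecomposition (G.componentIn (A.erase c) r) m s₁ e₁)
    (h₁0 : bag (G.componentIn (A.erase c) r) s₁ e₁ 0 = {r})
    (h₂ : G.IsPathDecomposition (A \ G.componentIn (A.erase c) r) m s₂ e₂)
    (h₂0 : bag (A \ G.componentIn (A.erase c) r) s₂ e₂ 0 = {c}) :
    ∃ s e, G.IsPathDecomposition A m s e := by
  set N := (G.componentIn (A.erase c) r).sup e₁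
  have hN : ∀ v ∈ G.componentIn (A.erase c) r, e₁ v ≤ N := fun v hv => le_sup hv
  have hr : r ∈ bag (G.componentIn (A.erase c) r) s₁ e₁ 0 := h₁0 ▸ mem_singleton_self r
  rw [mem_bag] at hr
  obtain ⟨s, e, h, -⟩ := (h₁.reverse hN).exists_append h₂ (fun v _ => Nat.sub_le _ _)
    (fun u hu v hv huv => by
      obtain rfl : v = c := by
        by_contra hvc
        exact (mem_sdiff.1 hv).2
          (mem_componentIn_of_adj hu (mem_erase.2 ⟨hvc, (mem_sdiff.1 hv).1⟩) huv)
      obtain rfl := hG.eq_of_adj_of_mem_componentIn hcr huv.symm hu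
      rw [h₂0, mem_bag]
      exact ⟨⟨hr.1, Nat.sub_le _ _, by omega⟩, mem_singleton_self _⟩)
    (by
      have := card_le_card (h₁.bag_reverse_subset hN (i := N))
      rw [Nat.sub_self, h₁0, card_singleton] at this
      rw [h₂0, card_singleton]
      omega)
  rw [union_sdiff_of_subset (componentIn_subset.trans (erase_subset c A))] at h
  exact ⟨s, e, h⟩

theorem IsAcyclic.exists_isPathDecomposition (hG : G.IsAcyclic) (k : ℕ) (hA : G.ConnectedOn A)
    (hcard : 2 * #A + 1 ≤ 3 ^ k) : ∃ s e, G.IsPathDecomposition A (k + 1) s e := by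
  induction k generalizing A with
  | zero =>
    obtain rfl : A = ∅ := card_eq_zero.1 (by rw [pow_zero] at hcard; omega)
    exact ⟨0, 0, isPathDecomposition_empty⟩
  | succ k ih =>
    rcases A.eq_empty_or_nonempty with rfl | hne
    · exact ⟨0, 0, isPathDecomposition_empty⟩
    obtain ⟨c, hc, hcent⟩ := hG.exists_centroid hA hne
    by_cases hL : #(G.largePart k (A.erase c)) ≤ 3 ^ k
    · obtain ⟨s, e, h, -⟩ := hG.exists_anchored ih hA hc hL
      exact ⟨s, e, h⟩
    obtain ⟨u, hu⟩ : (G.largePart k (A.erase c)).Nonempty := card_pos.1 (by omega)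
    obtain ⟨r, hcr, hr, hur⟩ := hA.exists_adj_mem_componentIn hc (mem_filter.1 hu).1
    have hCbig := (mem_filter.1 hu).2
    rw [componentIn_eq_of_mem hur] at hCbig
    have hC := hcent r hr
    have hCA : G.componentIn (A.erase c) r ⊆ A := componentIn_subset.trans (erase_subset c A)
    have hcC : c ∈ A \ G.componentIn (A.erase c) r :=
      mem_sdiff.2 ⟨hc, fun h => notMem_erase c A (componentIn_subset h)⟩
    rw [pow_succ] at hcard
    obtain ⟨s₁, e₁, h₁, h₁0⟩ := hG.exists_anchored ih connectedOn_componentIn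
      (self_mem_componentIn hr) (by
        refine (card_le_card (filter_subset _ _)).trans ?_
        rw [card_erase_of_mem (self_mem_componentIn hr)]
        omega)
    obtain ⟨s₂, e₂, h₂, h₂0⟩ := hG.exists_anchored ih (hA.sdiff_componentIn hc) hcC (by
      refine (card_le_card (filter_subset _ _)).trans ?_
      rw [card_erase_of_mem hcC, card_sdiff_of_subset hCA]
      omega)
    exact hG.exists_join hcr (by omega) h₁ h₁0 h₂ h₂0

end SimpleGraph

/-- Every forest `F` satisfies `ffn F ≤ log₃(2|V| + 1) + 2`. -/
theorem ffn_forest [Fintype V] (G : SimpleGraph V) (h : G.IsAcyclic) :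
    (ffn G : ℝ) ≤ Real.logb 3 (2 * (Fintype.card V : ℝ) + 1) + 2 := by
  have hx : (1 : ℝ) ≤ 2 * (Fintype.card V : ℝ) + 1 := by simp
  set k := ⌈Real.logb 3 (2 * (Fintype.card V : ℝ) + 1)⌉₊
  have hk : 2 * Fintype.card V + 1 ≤ 3 ^ k := by
    have : 2 * (Fintype.card V : ℝ) + 1 ≤ 3 ^ (k : ℝ) :=
      (Real.logb_le_iff_le_rpow (by norm_num) (by linarith)).1 (Nat.le_ceil _)
    rw [Real.rpow_natCast] at this
    exact_mod_cast this
  obtain ⟨s, e, hdec⟩ :=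
    SimpleGraph.exists_isPathDecomposition_of_forall_componentIn (S := univ) fun u _ =>
      h.exists_isPathDecomposition k SimpleGraph.connectedOn_componentIn
        ((Nat.add_le_add_right (Nat.mul_le_mul_left 2 (card_le_univ _)) 1).trans hk)
  have hffn : (ffn G : ℝ) ≤ k + 1 := by
    exact_mod_cast SimpleGraph.ffn_le_of_isPathDecomposition hdec
  have hkx : (k : ℝ) < Real.logb 3 (2 * (Fintype.card V : ℝ) + 1) + 1 :=
    Nat.ceil_lt_add_one (Real.logb_nonneg (by norm_num) hx)
  linarith
end
end

section
/- For a nonnegative integer x, let flips(x) denote the total number of occurrences of the patterns 01 and 10 in the binary representation of x (the number of indices i such that the i-th and (i+1)-th binary digits of x differ, over the digits of x without leading zeros). Let d ∈ ℕ be odd and set s = Σ_{i=0}^{(d−1)/2} 2^{2i+1}. Then flips(s) = d, and for every integer x ≠ 0 with s + x ≥ 0 one has flips(s + x) ≥ d − ⌊log₂|x|⌋ − 4. -/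
/-- The number of adjacent differing pairs in a list of binary digits. -/
def listFlips : List Bool → ℕ
  | [] => 0
  | [_] => 0
  | a :: b :: l => (if a = b then 0 else 1) + listFlips (b :: l)

/-- `flips n` is the number of occurrences of the patterns `01` and `10` in the binary
representation of `n` (without leading zeros); `flips 0 = 0`. -/
def flips (n : ℕ) : ℕ := listFlips n.bits

lemma listFlips_cons_cons (a b : Bool) (l : List Bool) :
    listFlips (a :: b :: l) = (if a = b then 0 else 1) + listFlips (b :: l) := rfl

lemma bits_ne_nil {n : ℕ} (h : n ≠ 0) : n.bits ≠ [] := by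
  rcases Nat.even_or_odd n with ⟨m, hm⟩ | ⟨m, hm⟩
  · have hm0 : m ≠ 0 := by omega
    rw [show n = 2 * m by omega, Nat.bit0_bits m hm0]; simp
  · rw [show n = 2 * m + 1 by omega, Nat.bit1_bits]; simp

lemma flips_two_mul {m : ℕ} (h : m ≠ 0) :
    flips (2 * m) = (if false = m.bits.headI then 0 else 1) + flips m := by
  unfold flips
  rw [Nat.bit0_bits m h]
  obtain ⟨c, l, hl⟩ : ∃ c l, m.bits = c :: l := by
    rcases hb : m.bits with _ | ⟨c, l⟩
    · exact absurd hb (bits_ne_nil h)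
    · exact ⟨c, l, rfl⟩
  rw [hl, listFlips_cons_cons]
  rfl

lemma flips_two_mul_add_one {m : ℕ} (h : m ≠ 0) :
    flips (2 * m + 1) = (if true = m.bits.headI then 0 else 1) + flips m := by
  unfold flips
  rw [Nat.bit1_bits m]
  obtain ⟨c, l, hl⟩ : ∃ c l, m.bits = c :: l := by
    rcases hb : m.bits with _ | ⟨c, l⟩
    · exact absurd hb (bits_ne_nil h)
    · exact ⟨c, l, rfl⟩
  rw [hl, listFlips_cons_cons]
  rfl

/-- dropping the low bit changes flips by at most one, and never increases it. -/
lemma flips_div2 (n : ℕ) : flips (n / 2) ≤ flips n ∧ flips n ≤ flips (n / 2) + 1 := by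
  rcases Nat.even_or_odd n with ⟨m, hm⟩ | ⟨m, hm⟩
  · rcases Nat.eq_zero_or_pos m with rfl | hm0
    · simp [show n = 0 by omega, flips]
    · rw [show n = 2 * m by omega, show 2 * m / 2 = m by omega,
        flips_two_mul (show m ≠ 0 by omega)]
      split <;> omega
  · rcases Nat.eq_zero_or_pos m with rfl | hm0
    · have : n = 1 := by omega
      subst this
      simp [flips, listFlips]
    · rw [show n = 2 * m + 1 by omega, show (2 * m + 1) / 2 = m by omega,
        flips_two_mul_add_one (show m ≠ 0 by omega)]
      split <;> omega

lemma flips_div_pow (n t : ℕ) :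
    flips (n / 2 ^ t) ≤ flips n ∧ flips n ≤ flips (n / 2 ^ t) + t := by
  induction t with
  | zero => simp
  | succ t ih =>
    have key := flips_div2 (n / 2 ^ t)
    have : n / 2 ^ (t + 1) = n / 2 ^ t / 2 := by
      rw [Nat.div_div_eq_div_mul, pow_succ]
    rw [this]
    omega

/-- adding one changes flips by at most one. -/
lemma flips_succ (n : ℕ) : flips (n + 1) ≤ flips n + 1 ∧ flips n ≤ flips (n + 1) + 1 := by
  induction n using Nat.strong_induction_on with
  | _ n ih =>
    rcases Nat.even_or_odd n with ⟨m, hm⟩ | ⟨m, hm⟩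
    · rcases Nat.eq_zero_or_pos m with rfl | hm0
      · simp [show n = 0 by omega, flips, listFlips]
      · rw [show n = 2 * m by omega, flips_two_mul (by omega),
          flips_two_mul_add_one (by omega)]
        split <;> split <;> simp_all <;> omega
    · rcases Nat.eq_zero_or_pos m with rfl | hm0
      · have : n = 1 := by omega
        subst this
        have hb2 : Nat.bits 2 = [false, true] := by
          rw [show (2:ℕ) = 2 * 1 from rfl, Nat.bit0_bits 1 one_ne_zero, Nat.one_bits]
        simp [flips, hb2, listFlips]
      · have ihm := ih m (by omega)
        have hmb : m.bits.headI = m.bodd := (Nat.bodd_eq_bits_head m).symm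
        have hmb1 : (m + 1).bits.headI = !m.bodd := by
          rw [← Nat.bodd_eq_bits_head, Nat.bodd_succ]
        rw [show n = 2 * m + 1 by omega, show 2 * m + 1 + 1 = 2 * (m + 1) by ring,
          flips_two_mul (by omega), flips_two_mul_add_one (by omega), hmb, hmb1]
        cases m.bodd <;> simp <;> omega

/-- the alternating sum `∑ 2^(2i+1)` recursion. -/
lemma altsum_succ (c : ℕ) :
    ∑ i ∈ Finset.range (c + 1 + 1), 2 ^ (2 * i + 1)
      = 4 * (∑ i ∈ Finset.range (c + 1), 2 ^ (2 * i + 1)) + 2 := by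
  rw [Finset.sum_range_succ' (fun i => 2 ^ (2 * i + 1)) (c + 1), Finset.mul_sum]
  congr 1
  · apply Finset.sum_congr rfl
    intro i _
    ring

lemma altsum_pos (c : ℕ) : 0 < ∑ i ∈ Finset.range (c + 1), 2 ^ (2 * i + 1) := by
  apply Finset.sum_pos (fun i _ => by positivity)
  exact ⟨0, Finset.mem_range.mpr (by omega)⟩

lemma altsum_even (c : ℕ) : (∑ i ∈ Finset.range (c + 1), 2 ^ (2 * i + 1)) % 2 = 0 := by
  have h : (∑ i ∈ Finset.range (c + 1), 2 ^ (2 * i + 1))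
      = 2 * ∑ i ∈ Finset.range (c + 1), 2 ^ (2 * i) := by
    rw [Finset.mul_sum]
    apply Finset.sum_congr rfl
    intro i _
    ring
  omega

lemma flips_altsum (c : ℕ) :
    flips (∑ i ∈ Finset.range (c + 1), 2 ^ (2 * i + 1)) = 2 * c + 1 := by
  induction c with
  | zero =>
    have h1 : (∑ i ∈ Finset.range 1, 2 ^ (2 * i + 1)) = 2 := by simp
    have hb2 : Nat.bits 2 = [false, true] := by
      rw [show (2:ℕ) = 2 * 1 from rfl, Nat.bit0_bits 1 one_ne_zero, Nat.one_bits]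
    simp [flips, h1, hb2, listFlips]
  | succ c ih =>
    set S := ∑ i ∈ Finset.range (c + 1), 2 ^ (2 * i + 1) with hS
    have hpos : 0 < S := altsum_pos c
    have heven : S % 2 = 0 := altsum_even c
    rw [altsum_succ c, ← hS, show 4 * S + 2 = 2 * (2 * S + 1) by ring,
      flips_two_mul (by omega), flips_two_mul_add_one (by omega), ← Nat.bodd_eq_bits_head,
      ← Nat.bodd_eq_bits_head]
    have h1 : (2 * S + 1).bodd = true := by simp
    have h2 : S.bodd = false := by
      have hm := Nat.mod_two_of_bodd S
      cases hb : S.bodd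
      · rfl
      · rw [hb] at hm; simp at hm; omega
    rw [h1, h2, ih]
    norm_num
    omega

/-- For odd `d` and `s = ∑_{i=0}^{(d-1)/2} 2^(2i+1)` we have `flips s = d`, and for
every integer `x ≠ 0` with `s + x ≥ 0` we have `flips (s + x) ≥ d - ⌊log₂ |x|⌋ - 4`. -/
theorem flips_alternating (d : ℕ) (hd : Odd d)
    (s : ℕ) (hs : s = ∑ i ∈ Finset.range ((d - 1) / 2 + 1), 2 ^ (2 * i + 1)) :
    flips s = d ∧
    ∀ x : ℤ, x ≠ 0 → 0 ≤ (s : ℤ) + x →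
      (d : ℤ) - ⌊Real.logb 2 ((|x| : ℤ) : ℝ)⌋ - 4 ≤ (flips ((s : ℤ) + x).toNat : ℤ) := by
  obtain ⟨c, hc⟩ := hd
  have hc' : (d - 1) / 2 = c := by omega
  have hfs : flips s = d := by
    rw [hs, hc', flips_altsum]; omega
  refine ⟨hfs, fun x hx hsx => ?_⟩
  -- set up the logarithm
  set n := x.natAbs with hn
  have hn1 : 1 ≤ n := by
    simp only [hn]
    omega
  have habs : |x| = (n : ℤ) := Int.abs_eq_natAbs x
  set k := Nat.log 2 n with hk
  have hlog : ⌊Real.logb 2 ((|x| : ℤ) : ℝ)⌋ = (k : ℤ) := by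
    rw [habs]
    push_cast
    rw [show (2 : ℝ) = ((2 : ℕ) : ℝ) by norm_cast,
      Real.floor_logb_natCast (Nat.cast_nonneg n), Int.log_natCast]
  rw [hlog]
  -- bound |x| < 2^(k+1) ≤ 2^t with t = k+2
  set t := k + 2 with ht
  have hxlt : n < 2 ^ t := by
    have h1 : n < 2 ^ (k + 1) := Nat.lt_pow_succ_log_self (by norm_num : 1 < 2) n
    have h2 : 2 ^ (k + 1) ≤ 2 ^ t := Nat.pow_le_pow_right (by norm_num) (by omega)
    exact lt_of_lt_of_le h1 h2
  -- N = (s + x).toNat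
  set N := ((s : ℤ) + x).toNat with hN
  have hNs : (N : ℤ) = (s : ℤ) + x := Int.toNat_of_nonneg hsx
  have hxb1 : (x : ℤ) ≤ n := habs ▸ le_abs_self x
  have hxb2 : -(n : ℤ) ≤ x := by rw [← habs]; exact neg_abs_le x
  -- nat inequalities: N ≤ s + 2^t, s ≤ N + 2^t
  have hb1 : N ≤ s + 2 ^ t := by
    have : (N : ℤ) ≤ (s : ℤ) + 2 ^ t := by
      rw [hNs]
      have : (n : ℤ) < 2 ^ t := by exact_mod_cast hxlt
      omega
    exact_mod_cast this
  have hb2 : s ≤ N + 2 ^ t := by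
    have : (s : ℤ) ≤ (N : ℤ) + 2 ^ t := by
      rw [hNs]
      have : (n : ℤ) < 2 ^ t := by exact_mod_cast hxlt
      omega
    exact_mod_cast this
  -- quotients are within 1 of each other
  have hq1 : N / 2 ^ t ≤ s / 2 ^ t + 1 := by
    calc N / 2 ^ t ≤ (s + 2 ^ t) / 2 ^ t := Nat.div_le_div_right hb1
    _ = s / 2 ^ t + 1 := Nat.add_div_right s (by positivity)
  have hq2 : s / 2 ^ t ≤ N / 2 ^ t + 1 := by
    calc s / 2 ^ t ≤ (N + 2 ^ t) / 2 ^ t := Nat.div_le_div_right hb2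
    _ = N / 2 ^ t + 1 := Nat.add_div_right N (by positivity)
  -- flips comparisons
  have hA := flips_div_pow s t
  have hB := flips_div_pow N t
  have hC : flips (s / 2 ^ t) ≤ flips (N / 2 ^ t) + 1 := by
    set a := s / 2 ^ t
    set b := N / 2 ^ t
    rcases Nat.lt_trichotomy a b with h | h | h
    · have : b = a + 1 := by omega
      rw [this]
      exact (flips_succ a).2
    · rw [h]; omega
    · have : a = b + 1 := by omega
      rw [this]
      have := (flips_succ b).1
      omega
  have : d ≤ flips N + t + 1 := by omega
  omega
end
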